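/- arXiv:2107.08340 — 6 statements merged into one kernel-verified Lean document; each statement's English description precedes it below -/
import Mathlib

section
/- Let $(\mathfrak{p}_{ij}^k)$ be a family of scalars with $\mathfrak{p}_{ij}^0=\delta_{0,i+j}$ and $\mathfrak{p}_{ij}^{l+h}=\sum_{a+b=i}\sum_{c+d=j}\mathfrak{p}_{ac}^l\mathfrak{p}_{bd}^h$, and with $\mathfrak{p}_{ij}^k=0$ for $k>i+j$. Then for all $k\ge 1$, $\mathfrak{p}_{ij}^k=\sum \prod_{s=1}^k\mathfrak{p}_{i_sj_s}^1$, where the sum runs over all decompositions $i_1+\cdots+i_k=i$, $j_1+\cdots+j_k=j$ with $i_s+j_s\ge 1$ for all $s$. -/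
/-!
Comultiplicativity with `l = 1` writes `p · · (k + 1)` as the two-variable convolution of
`p · · 1` with `p · · k`, so `p · · k` is the `k`-fold convolution power of `p · · 1`.
The restriction `i_s + j_s ≥ 1` is harmless: a factor with `i_s + j_s = 0` is
`p 0 0 1 = 0` by the vanishing condition.
-/

open Finset

namespace Finset.Nat

theorem sum_antidiagonalTuple_succ {M : Type*} [AddCommMonoid M] (k n : ℕ)
    (f : (Fin (k + 1) → ℕ) → M) :
    ∑ x ∈ antidiagonalTuple (k + 1) n, f x =
      ∑ ab ∈ antidiagonal n, ∑ x ∈ antidiagonalTuple k ab.2, f (Fin.cons ab.1 x) := by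
  rw [sum_sigma']
  refine sum_bij' (fun x _ => ⟨(x 0, ∑ s : Fin k, x s.succ), Fin.tail x⟩)
    (fun y _ => Fin.cons y.1.1 y.2) ?_ ?_ ?_ ?_ ?_
  · intro x hx
    rw [mem_antidiagonalTuple, Fin.sum_univ_succ] at hx
    simpa [mem_antidiagonalTuple, Fin.tail] using hx
  · rintro ⟨⟨a, b⟩, x⟩ hy
    simp only [mem_sigma, HasAntidiagonal.mem_antidiagonal, mem_antidiagonalTuple] at hy
    simp [mem_antidiagonalTuple, Fin.sum_univ_succ, hy.1, hy.2]
  · exact fun x _ => Fin.cons_self_tail x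
  · rintro ⟨⟨a, b⟩, x⟩ hy
    simp only [mem_sigma, HasAntidiagonal.mem_antidiagonal, mem_antidiagonalTuple] at hy
    simp [hy.2]
  · exact fun x _ => congrArg f (Fin.cons_self_tail x).symm

theorem sum_prod_antidiagonalTuple_succ {R : Type*} [CommSemiring R] (f : ℕ → ℕ → R)
    (k i j : ℕ) :
    ∑ a ∈ antidiagonalTuple (k + 1) i, ∑ b ∈ antidiagonalTuple (k + 1) j, ∏ s, f (a s) (b s) =
      ∑ ac ∈ antidiagonal i, ∑ bd ∈ antidiagonal j, f ac.1 bd.1 *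
        ∑ a ∈ antidiagonalTuple k ac.2, ∑ b ∈ antidiagonalTuple k bd.2, ∏ s, f (a s) (b s) := by
  simp_rw [sum_antidiagonalTuple_succ, Fin.prod_univ_succ, Fin.cons_zero, Fin.cons_succ, mul_sum]
  exact sum_congr rfl fun _ _ => sum_comm

end Finset.Nat

theorem ite_forall_prod_eq_prod {ι M : Type*} [Fintype ι] [CommMonoidWithZero M]
    (P : ι → Prop) [Decidable (∀ s, P s)] (g : ι → M) (hg : ∀ s, ¬P s → g s = 0) :
    (if ∀ s, P s then ∏ s, g s else 0) = ∏ s, g s := by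
  split_ifs with h
  · rfl
  · obtain ⟨s, hs⟩ := not_forall.mp h
    exact (prod_eq_zero (mem_univ s) (hg s hs)).symm

theorem stmt1_general {K : Type*} [Field K]
    (p : ℕ → ℕ → ℕ → K)
    (hcm : ∀ i j l h : ℕ,
      p i j (l + h) = ∑ ab ∈ Finset.HasAntidiagonal.antidiagonal i, ∑ cd ∈ Finset.HasAntidiagonal.antidiagonal j,
        p ab.1 cd.1 l * p ab.2 cd.2 h)
    (hvan : ∀ i j k, i + j < k → p i j k = 0) :
    ∀ i j k, 1 ≤ k →
      p i j k = ∑ a ∈ Finset.Nat.antidiagonalTuple k i, ∑ b ∈ Finset.Nat.antidiagonalTuple k j,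
        if ∀ s : Fin k, 1 ≤ a s + b s then ∏ s : Fin k, p (a s) (b s) 1 else 0 := by
  have convolution_power : ∀ i j k, 1 ≤ k → p i j k =
      ∑ a ∈ Nat.antidiagonalTuple k i, ∑ b ∈ Nat.antidiagonalTuple k j, ∏ s, p (a s) (b s) 1 := by
    intro i j k hk
    induction k, hk using Nat.le_induction generalizing i j with
    | base => simp [Nat.antidiagonalTuple_one]
    | succ k _ ih =>
      rw [Nat.sum_prod_antidiagonalTuple_succ (p · · 1), add_comm, hcm]
      simp_rw [ih]
  intro i j k hk
  rw [convolution_power i j k hk]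
  refine sum_congr rfl fun a _ => sum_congr rfl fun b _ => (ite_forall_prod_eq_prod _ _ ?_).symm
  exact fun s hs => hvan _ _ _ (by omega)

/-- the product formula for the coefficients of a coalgebra morphism. -/
theorem stmt1 {K : Type*} [Field K] [CharZero K]
    (p : ℕ → ℕ → ℕ → K)
    (h0 : ∀ i j, p i j 0 = if i + j = 0 then 1 else 0)
    (hcm : ∀ i j l h : ℕ,
      p i j (l + h) = ∑ ab ∈ Finset.HasAntidiagonal.antidiagonal i, ∑ cd ∈ Finset.HasAntidiagonal.antidiagonal j,
        p ab.1 cd.1 l * p ab.2 cd.2 h)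
    (hvan : ∀ i j k, i + j < k → p i j k = 0) :
    ∀ i j k, 1 ≤ k →
      p i j k = ∑ a ∈ Finset.Nat.antidiagonalTuple k i, ∑ b ∈ Finset.Nat.antidiagonalTuple k j,
        if ∀ s : Fin k, 1 ≤ a s + b s then ∏ s : Fin k, p (a s) (b s) 1 else 0 :=
  stmt1_general p hcm hvan
end

section
/- Let $(\mathfrak{p}_{ij}^k)$ satisfy the comultiplicativity identity, $\mathfrak{p}_{ij}^k=0$ for $k>i$, $\mathfrak{p}_{i0}^i=(\mathfrak{p}_{10}^1)^i$, and $\mathfrak{p}_{10}^1\ne 0$. Then $\mathfrak{p}_{i1}^i=i\,\mathfrak{p}_{11}^1(\mathfrak{p}_{10}^1)^{i-1}$ for all $i\ge 1$. -/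
open Finset

section Comultiplicative

variable {R : Type*} [CommSemiring R] {p : ℕ → ℕ → ℕ → R}

def IsComultiplicative (p : ℕ → ℕ → ℕ → R) : Prop :=
  ∀ i j l h : ℕ,
    p i j (l + h) = ∑ ab ∈ antidiagonal i, ∑ cd ∈ antidiagonal j, p ab.1 cd.1 l * p ab.2 cd.2 h

/-- Take `l = m`, `h = 1` in the comultiplicativity identity: since `p a c k = 0` for `a < k`,
every summand except `(a, b) = (m, 1)` vanishes. -/
theorem comul_diag_succ_eq_sum (hcm : IsComultiplicative p)
    (hvan : ∀ i j k, i < k → p i j k = 0) (m j : ℕ) :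
    p (m + 1) j (m + 1) = ∑ cd ∈ antidiagonal j, p m cd.1 m * p 1 cd.2 1 := by
  rw [hcm, sum_eq_single_of_mem (m, 1) (by simp)]
  rintro ⟨a, b⟩ hab hne
  rw [HasAntidiagonal.mem_antidiagonal] at hab
  rcases lt_or_ge a m with ha | ha
  · simp [hvan a _ m ha]
  · obtain rfl : b = 0 := by
      by_contra hb
      exact hne (by ext <;> simp <;> omega)
    simp [hvan 0 _ 1 one_pos]

theorem comul_diag_one_succ (hcm : IsComultiplicative p)
    (hvan : ∀ i j k, i < k → p i j k = 0) (m : ℕ) :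
    p (m + 1) 1 (m + 1) = p m 0 m * p 1 1 1 + p m 1 m * p 1 0 1 := by
  rw [comul_diag_succ_eq_sum hcm hvan, Nat.sum_antidiagonal_succ]
  simp

theorem comul_diag_one_succ_eq_mul_pow (hcm : IsComultiplicative p)
    (hvan : ∀ i j k, i < k → p i j k = 0) (hdiag : ∀ i, p i 0 i = p 1 0 1 ^ i) (n : ℕ) :
    p (n + 1) 1 (n + 1) = (n + 1) * p 1 1 1 * p 1 0 1 ^ n := by
  induction n with
  | zero => simp
  | succ n ih =>
    rw [comul_diag_one_succ hcm hvan, ih, hdiag]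
    push_cast
    ring

end Comultiplicative

theorem stmt4_general {K : Type*} [Field K]
    (p : ℕ → ℕ → ℕ → K)
    (hcm : ∀ i j l h : ℕ,
      p i j (l + h) = ∑ ab ∈ Finset.HasAntidiagonal.antidiagonal i, ∑ cd ∈ Finset.HasAntidiagonal.antidiagonal j,
        p ab.1 cd.1 l * p ab.2 cd.2 h)
    (hvan : ∀ i j k, i < k → p i j k = 0)
    (hdiag : ∀ i, p i 0 i = (p 1 0 1) ^ i) :
    ∀ i, 1 ≤ i → p i 1 i = (i : K) * p 1 1 1 * (p 1 0 1) ^ (i - 1) := by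
  intro i hi
  obtain ⟨n, rfl⟩ := Nat.exists_eq_add_of_le' hi
  simpa using comul_diag_one_succ_eq_mul_pow hcm hvan hdiag n

/-- `p i 1 i = i * p 1 1 1 * (p 1 0 1)^(i-1)` for `i ≥ 1`. -/
theorem stmt4 {K : Type*} [Field K] [CharZero K]
    (p : ℕ → ℕ → ℕ → K)
    (hcm : ∀ i j l h : ℕ,
      p i j (l + h) = ∑ ab ∈ Finset.HasAntidiagonal.antidiagonal i, ∑ cd ∈ Finset.HasAntidiagonal.antidiagonal j,
        p ab.1 cd.1 l * p ab.2 cd.2 h)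
    (hvan : ∀ i j k, i < k → p i j k = 0)
    (hdiag : ∀ i, p i 0 i = (p 1 0 1) ^ i)
    (hne : p 1 0 1 ≠ 0) :
    ∀ i, 1 ≤ i → p i 1 i = (i : K) * p 1 1 1 * (p 1 0 1) ^ (i - 1) :=
  stmt4_general p hcm hvan hdiag
end

section
/- Let $K$ be a field of characteristic $0$, $g\in K[[x]]$ with $g=x+O(x^2)$, $k\in\mathbb{N}$ with $k\ge 1$, and let $Q_1$ be the unique series with $Q_1=x+O(x^2)$ and $gQ_1'=Q_1$. If $R\in K[[x]]\setminus\{0\}$ satisfies $g(x)R'(x)=kR(x)$, then $\operatorname{ord}(R)=k$ and there exists $\lambda\in K$ with $R=\lambda Q_1^k$. -/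
/-!
Since `g = x + O(x²)`, the operator `θ = g · d/dx` acts on the lowest-order term of a series as
multiplication by its order `n`. Hence a nonzero solution of `θ S = k S` has order exactly `k`.
As `θ` is a derivation up to the factor `g`, `θ Q = Q` gives `θ (Q^k) = k Q^k`, so subtracting the
multiple of `Q^k` with the same `x^k`-coefficient from `R` leaves a solution of order `> k`,
which must vanish.
-/

open PowerSeries

theorem Derivation.mul_apply_pow_of_mul_apply_eq {R A : Type*} [CommSemiring R] [CommRing A]
    [Algebra R A] (D : Derivation R A A) {g a : A} (h : g * D a = a) (k : ℕ) :
    g * D (a ^ k) = k * a ^ k := by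
  cases k with
  | zero => simp
  | succ k =>
    rw [D.leibniz_pow, Nat.add_sub_cancel, nsmul_eq_mul, smul_eq_mul]
    linear_combination ((k + 1 : ℕ) * a ^ k) * h

namespace PowerSeries

section

variable {R : Type*} [CommSemiring R] {g S : R⟦X⟧}

theorem coeff_mul_derivative_of_forall_lt (hg0 : constantCoeff g = 0) (hg1 : coeff 1 g = 1)
    {n : ℕ} (hS : ∀ i < n, coeff i S = 0) :
    coeff n (g * d⁄dX R S) = n * coeff n S := by
  cases n with
  | zero => simp [hg0]
  | succ n =>
    rw [coeff_mul, Finset.sum_eq_single (1, n)]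
    · rw [hg1, coeff_derivative]
      push_cast
      ring
    · rintro ⟨a, b⟩ hab hne
      rw [Finset.HasAntidiagonal.mem_antidiagonal] at hab
      rcases Nat.eq_zero_or_pos a with rfl | ha
      · simp [hg0]
      · have hb : b + 1 < n + 1 := by
          by_contra
          exact hne (by ext <;> simp <;> omega)
        rw [coeff_derivative, hS _ hb, zero_mul, mul_zero]
    · intro h
      exact absurd (by simp [add_comm]) h

end

section

variable {R : Type*} [CommRing R] [IsDomain R] [CharZero R] {g S : R⟦X⟧} {k : ℕ}

theorem order_eq_of_mul_derivative_eq (hg0 : constantCoeff g = 0) (hg1 : coeff 1 g = 1)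
    (hS : S ≠ 0) (heq : g * d⁄dX R S = k * S) : S.order = k := by
  set n := S.order.toNat
  have hlow : ∀ i < n, coeff i S = 0 := fun i hi ↦ coeff_of_lt_order_toNat i hi
  have hcoeff : (n : R) * coeff n S = k * coeff n S := by
    rw [← coeff_mul_derivative_of_forall_lt hg0 hg1 hlow, heq, ← map_natCast C, coeff_C_mul]
  have hnk : n = k := by exact_mod_cast mul_right_cancel₀ (coeff_order hS) hcoeff
  rw [← coe_toNat_order hS]
  exact congrArg _ hnk

theorem eq_zero_of_mul_derivative_eq_of_coeff_eq_zero (hg0 : constantCoeff g = 0)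
    (hg1 : coeff 1 g = 1) (heq : g * d⁄dX R S = k * S) (hk : coeff k S = 0) : S = 0 := by
  by_contra hS
  exact (order_eq_nat.mp (order_eq_of_mul_derivative_eq hg0 hg1 hS heq)).1 hk

end

end PowerSeries

theorem stmt8_general {K : Type*} [Field K] [CharZero K] (g Q R : K⟦X⟧) (k : ℕ)
    (hg0 : constantCoeff g = 0) (hg1 : coeff 1 g = 1)
    (hQ1 : coeff 1 Q = 1)
    (hQeq : g * PowerSeries.derivative K Q = Q)
    (hR : R ≠ 0)
    (hReq : g * PowerSeries.derivative K R = (k : K⟦X⟧) * R) :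
    R.order = (k : ℕ∞) ∧ ∃ l : K, R = C l * Q ^ k := by
  have hQk : (Q ^ k).order = k := by
    have hQ : Q ≠ 0 := by rintro rfl; simp at hQ1
    exact order_eq_of_mul_derivative_eq hg0 hg1 (pow_ne_zero k hQ)
      ((d⁄dX K).mul_apply_pow_of_mul_apply_eq hQeq k)
  have hQk_coeff : coeff k (Q ^ k) ≠ 0 := (order_eq_nat.mp hQk).1
  set l := coeff k R / coeff k (Q ^ k)
  refine ⟨order_eq_of_mul_derivative_eq hg0 hg1 hR hReq, l, sub_eq_zero.mp ?_⟩
  refine eq_zero_of_mul_derivative_eq_of_coeff_eq_zero (k := k) hg0 hg1 ?_ ?_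
  · rw [map_sub, Derivation.leibniz, derivative_C, smul_zero, add_zero, smul_eq_mul]
    linear_combination hReq - C l * (d⁄dX K).mul_apply_pow_of_mul_apply_eq hQeq k
  · rw [map_sub, coeff_C_mul, div_mul_cancel₀ _ hQk_coeff, sub_self]

/-- solutions of `g R' = k R` have order `k` and are scalar multiples of `Q₁^k`. -/
theorem stmt8 {K : Type*} [Field K] [CharZero K] (g Q R : K⟦X⟧) (k : ℕ) (hk : 1 ≤ k)
    (hg0 : constantCoeff g = 0) (hg1 : coeff 1 g = 1)
    (hQ0 : constantCoeff Q = 0) (hQ1 : coeff 1 Q = 1)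
    (hQeq : g * PowerSeries.derivative K Q = Q)
    (hR : R ≠ 0)
    (hReq : g * PowerSeries.derivative K R = (k : K⟦X⟧) * R) :
    R.order = (k : ℕ∞) ∧ ∃ l : K, R = C l * Q ^ k :=
  stmt8_general g Q R k hg0 hg1 hQ1 hQeq hR hReq
end

section
/- Let $K$ be a field of characteristic $0$, $v_0\ge 1$, and $f=1+x^{v_0}+\sum_{v>v_0}p_vx^v\in K[[x]]$. Set $g=f(f^{v_0}-1)/f'$ (well-defined since $f'$ has invertible leading structure after dividing by $v_0x^{v_0-1}$; equivalently $g$ is the unique series with $gf'=f(f^{v_0}-1)$). Let $Q_1$ be the unique series with $Q_1=x+O(x^2)$ and $gQ_1'=Q_1$. Then $v_0Q_1(x)^{v_0}=1-f(x)^{-v_0}$. -/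
/-!
Both sides solve the linear equation `g R' = v₀ R`: for `v₀ Q^{v₀}` this comes from `g Q' = Q`,
for `1 - f^{-v₀}` from `g f' = f (f^{v₀} - 1)`. Writing `f = 1 + X^{v₀} h`, the defining equation
of `g` gives `g = X + O(X²)`, so the coefficient of `X^n` in `g R'` is `n R_n` plus terms in lower
coefficients of `R`. Hence a solution is determined by its coefficients up to `X^{v₀}`, and both
sides are `v₀ X^{v₀} + O(X^{v₀+1})`.
-/

open PowerSeries

namespace PowerSeries

section CommRing

variable {R : Type*} [CommRing R]

theorem X_mul_derivative_X_pow_mul (n : ℕ) (h : R⟦X⟧) :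
    X * d⁄dX R (X ^ n * h) = X ^ n * ((n : R⟦X⟧) * h + X * d⁄dX R h) := by
  rw [Derivation.leibniz, derivative_pow, derivative_X, smul_eq_mul, smul_eq_mul]
  cases n with
  | zero => simp
  | succ n => push_cast; ring

theorem coeff_X_mul_mul_derivative_of_X_pow_dvd {w F : R⟦X⟧} {n : ℕ} (hF : X ^ n ∣ F) :
    coeff n (X * w * d⁄dX R F) = constantCoeff w * n * coeff n F := by
  obtain ⟨V, rfl⟩ := hF
  rw [mul_right_comm, X_mul_derivative_X_pow_mul, mul_assoc]
  simp only [coeff_X_pow_mul', le_refl, if_true, Nat.sub_self, coeff_zero_eq_constantCoeff,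
    map_mul, map_add, map_natCast, constantCoeff_X, zero_mul, add_zero]
  ring

theorem eq_zero_of_X_mul_mul_derivative_eq_natCast_mul [IsAddTorsionFree R] {w F : R⟦X⟧}
    {m : ℕ} (hw : constantCoeff w = 1) (hF : X * w * d⁄dX R F = (m : R⟦X⟧) * F)
    (hFm : X ^ (m + 1) ∣ F) : F = 0 := by
  have hdvd : ∀ n, X ^ n ∣ F := by
    intro n
    induction n with
    | zero => simp
    | succ n ih =>
      rcases le_or_gt n m with hnm | hmn
      · exact (pow_dvd_pow X (by omega)).trans hFm
      obtain ⟨k, rfl⟩ := Nat.exists_eq_add_of_lt hmn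
      -- comparing coefficients of `X ^ n` in `hF` gives `n F_n = m F_n`
      have hcoeff : (k + 1) • coeff (m + k + 1) F = 0 := by
        have := congrArg (coeff (m + k + 1)) hF
        rw [coeff_X_mul_mul_derivative_of_X_pow_dvd ih, hw, ← map_natCast C, coeff_C_mul] at this
        rw [nsmul_eq_mul]
        push_cast at this ⊢
        linear_combination this
      have hzero : coeff (m + k + 1) F = 0 :=
        nsmul_right_injective (Nat.succ_ne_zero k) (hcoeff.trans (nsmul_zero _).symm)
      rw [X_pow_dvd_iff] at ih ⊢
      intro i hi
      rcases Nat.lt_succ_iff_lt_or_eq.mp hi with hi | rfl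
      exacts [ih i hi, hzero]
  ext n
  simpa using X_pow_dvd_iff.mp (hdvd (n + 1)) n n.lt_succ_self

theorem mul_derivative_pow_of_mul_derivative_eq {g f F : R⟦X⟧} (h : g * d⁄dX R f = f * F)
    (n : ℕ) : g * d⁄dX R (f ^ n) = (n : R⟦X⟧) * f ^ n * F := by
  rw [derivative_pow]
  cases n with
  | zero => simp
  | succ n =>
    rw [Nat.add_sub_cancel, pow_succ]
    linear_combination ((n + 1 : ℕ) * f ^ n : R⟦X⟧) * h

theorem exists_one_add_X_pow_mul_pow_eq {n : ℕ} (hn : n ≠ 0) (h : R⟦X⟧) (m : ℕ) :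
    ∃ P, (1 + X ^ n * h) ^ m = 1 + X ^ n * P ∧ constantCoeff P = m * constantCoeff h := by
  refine ⟨h * ∑ i ∈ Finset.range m, (1 + X ^ n * h) ^ i, ?_, ?_⟩
  · linear_combination (geom_sum_mul (1 + X ^ n * h) m).symm
  · simp [hn, mul_comm]

theorem X_pow_succ_dvd_X_pow_mul_sub {A B : R⟦X⟧} (h : constantCoeff A = constantCoeff B)
    (n : ℕ) : X ^ (n + 1) ∣ X ^ n * A - X ^ n * B := by
  rw [← mul_sub, pow_succ]
  exact mul_dvd_mul_left _ (X_dvd_iff.mpr (by rw [map_sub, h, sub_self]))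

theorem exists_eq_one_add_X_pow_mul {f : R⟦X⟧} {n : ℕ} (hn : n ≠ 0) (h0 : coeff 0 f = 1)
    (hn1 : coeff n f = 1) (hlt : ∀ k, 0 < k → k < n → coeff k f = 0) :
    ∃ h, f = 1 + X ^ n * h ∧ constantCoeff h = 1 := by
  have hdvd : X ^ n ∣ f - 1 := by
    refine X_pow_dvd_iff.mpr fun k hk => ?_
    rcases Nat.eq_zero_or_pos k with rfl | hk0
    · simp only [coeff_zero_eq_constantCoeff_apply] at h0
      simp [h0]
    · simp [coeff_one, hk0.ne', hlt k hk0 hk]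
  obtain ⟨h, hh⟩ := hdvd
  refine ⟨h, by rw [← hh]; ring, ?_⟩
  simpa [coeff_X_pow_mul', coeff_one, hn, hn1] using (congrArg (coeff n) hh).symm

end CommRing

section Field

variable {K : Type*} [Field K]

theorem mul_derivative_one_sub_inv {g u c : K⟦X⟧} (hu : constantCoeff u ≠ 0)
    (h : g * d⁄dX K u = c * u * (u - 1)) : g * d⁄dX K (1 - u⁻¹) = c * (1 - u⁻¹) := by
  have huu := PowerSeries.mul_inv_cancel u hu
  rw [map_sub, derivative_one, derivative_inv']
  linear_combination u⁻¹ ^ 2 * h + c * (u⁻¹ * u - u⁻¹ + 1) * huu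

theorem one_sub_inv_one_add_X_pow_mul (n : ℕ) (P : K⟦X⟧)
    (hu : constantCoeff (1 + X ^ n * P) ≠ 0) :
    1 - (1 + X ^ n * P)⁻¹ = X ^ n * (P * (1 + X ^ n * P)⁻¹) := by
  linear_combination (-1 : K⟦X⟧) * PowerSeries.mul_inv_cancel _ hu

theorem eq_X_mul_of_mul_derivative_eq {g f q r : K⟦X⟧} {n : ℕ}
    (h : g * d⁄dX K f = X ^ n * r) (hq : X * d⁄dX K f = X ^ n * q)
    (hq0 : constantCoeff q ≠ 0) : g = X * (r * q⁻¹) := by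
  have hgq : g * q = X * r := X_pow_mul_cancel (k := n) (by linear_combination X * h - g * hq)
  linear_combination q⁻¹ * hgq - g * PowerSeries.mul_inv_cancel q hq0

end Field

end PowerSeries

/-- `v₀ Q₁^{v₀} = 1 - f^{-v₀}`. -/
theorem stmt9 {K : Type*} [Field K] [CharZero K] (v0 : ℕ) (hv0 : 1 ≤ v0) (f g Q : K⟦X⟧)
    (hf0 : coeff 0 f = 1) (hfv : coeff v0 f = 1)
    (hfm : ∀ v, 0 < v → v < v0 → coeff v f = 0)
    (hg : g * PowerSeries.derivative K f = f * (f ^ v0 - 1))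
    (hQ0 : constantCoeff Q = 0) (hQ1 : coeff 1 Q = 1)
    (hQeq : g * PowerSeries.derivative K Q = Q) :
    (v0 : K⟦X⟧) * Q ^ v0 = 1 - (f ^ v0)⁻¹ := by
  have hv0' : v0 ≠ 0 := by omega
  obtain ⟨h, rfl, hh⟩ := exists_eq_one_add_X_pow_mul hv0' hf0 hfv hfm
  obtain ⟨P, hu, hP⟩ := exists_one_add_X_pow_mul_pow_eq hv0' h v0
  have hu0 : constantCoeff (1 + X ^ v0 * P) ≠ 0 := by simp [hv0']
  obtain ⟨w, rfl, hw⟩ : ∃ w, g = X * w ∧ constantCoeff w = 1 := by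
    have hdf : X * d⁄dX K (1 + X ^ v0 * h) = X ^ v0 * ((v0 : K⟦X⟧) * h + X * d⁄dX K h) := by
      rw [map_add, derivative_one, zero_add, X_mul_derivative_X_pow_mul]
    exact ⟨_, eq_X_mul_of_mul_derivative_eq (r := (1 + X ^ v0 * h) * P)
      (by rw [hg, hu]; ring) hdf (by simp [hh, hv0']), by simp [hh, hP, hv0']⟩
  obtain ⟨W, rfl⟩ := X_dvd_iff.mpr hQ0
  rw [coeff_succ_X_mul, coeff_zero_eq_constantCoeff_apply] at hQ1
  have hS : X * w * d⁄dX K ((v0 : K⟦X⟧) * (X * W) ^ v0)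
      = (v0 : K⟦X⟧) * ((v0 : K⟦X⟧) * (X * W) ^ v0) := by
    rw [← nsmul_eq_mul, map_nsmul, nsmul_eq_mul, mul_left_comm,
      mul_derivative_pow_of_mul_derivative_eq (hQeq.trans (mul_one _).symm), mul_one,
      nsmul_eq_mul]
  have hT : X * w * d⁄dX K (1 - (1 + X ^ v0 * P)⁻¹)
      = (v0 : K⟦X⟧) * (1 - (1 + X ^ v0 * P)⁻¹) :=
    mul_derivative_one_sub_inv hu0 (by rw [← hu, mul_derivative_pow_of_mul_derivative_eq hg])
  rw [hu]
  rw [one_sub_inv_one_add_X_pow_mul v0 P hu0] at hT ⊢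
  rw [mul_pow, mul_left_comm] at hS ⊢
  refine sub_eq_zero.mp (eq_zero_of_X_mul_mul_derivative_eq_natCast_mul hw
    (by rw [map_sub, mul_sub, mul_sub, hS, hT]) (X_pow_succ_dvd_X_pow_mul_sub ?_ v0))
  simp [hP, hh, hQ1, hv0']
end

section
/- Let $n\ge 2$, $K$ a field, and suppose families $(\mathfrak{p}_{ij}^k)$ and $(\mathfrak{d}_{ij}^k)$ (indices $0\le i,j,k<n$) satisfy: $\mathfrak{p}_{ij}^k=\mathfrak{d}_{ij}^k=0$ if $j>0$ or $k>i$, $\mathfrak{p}_{00}^0=\mathfrak{d}_{00}^0=1$, $\mathfrak{p}_{i0}^k=\sum_{i_1+\cdots+i_k=i,\ i_s>0}\prod_s\mathfrak{p}_{i_s0}^1$, $\mathfrak{d}_{i0}^k=\sum_{i_1+\cdots+i_k=i,\ i_s>0}\prod_s\mathfrak{d}_{i_s0}^1$, and $\sum_{h=1}^{i}\mathfrak{p}_{i0}^h\mathfrak{d}_{h0}^1=\sum_{h=1}^{i}\mathfrak{d}_{i0}^h\mathfrak{p}_{h0}^1$ for all $i$. Then all three braid equations $\sum_{a+b=j}\sum_{h,l}\mathfrak{p}_{ia}^h\mathfrak{d}_{kb}^l\mathfrak{p}_{hl}^1=\sum_{c+d=k}\sum_{h,l}\mathfrak{p}_{ic}^h\mathfrak{p}_{jd}^l\mathfrak{p}_{hl}^1$,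 $\sum_{a+b=j}\sum_{h,l}\mathfrak{p}_{ia}^h\mathfrak{p}_{kb}^l\mathfrak{d}_{hl}^1=\sum_{c+d=k}\sum_{h,l}\mathfrak{d}_{ic}^h\mathfrak{d}_{jd}^l\mathfrak{p}_{hl}^1$, and $\sum_{a+b=j}\sum_{h,l}\mathfrak{d}_{ia}^h\mathfrak{p}_{kb}^l\mathfrak{d}_{hl}^1=\sum_{c+d=k}\sum_{h,l}\mathfrak{d}_{ic}^h\mathfrak{d}_{jd}^l\mathfrak{d}_{hl}^1$ hold for all $i,j,k$. -/
/-!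
Every coefficient with a positive second lower index vanishes, so a braid sum with `j > 0`
is zero and in the remaining one only `l = 0` contributes. Since `p k 0 0 = d k 0 0 = δ_{k0}`
(the empty composition), both sides vanish unless `j = k = 0`, where the first and third
equations are trivial and the second is the symmetry hypothesis.
-/

open Finset

def IsTriangular {K : Type*} [Zero K] (n : ℕ) (f : ℕ → ℕ → ℕ → K) : Prop :=
  ∀ i j k, i < n → j < n → k < n → (0 < j ∨ i < k) → f i j k = 0

/-- Both sides of each braid equation have this shape, the right-hand side with `j` and `k`
swapped. -/
def braidSum {K : Type*} [CommRing K] (f g e : ℕ → ℕ → ℕ → K) (i j k : ℕ) : K :=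
  ∑ ab ∈ antidiagonal j, ∑ h ∈ range (i + 1), ∑ l ∈ range (k + 1),
    f i ab.1 h * g k ab.2 l * e h l 1

lemma apply_zero_zero_eq_ite {K : Type*} [CommRing K] {f : ℕ → ℕ → ℕ → K} {m : ℕ}
    (h00 : f 0 0 0 = 1)
    (hform : f m 0 0 = ∑ t ∈ (Nat.antidiagonalTuple 0 m).filter (fun t => ∀ s : Fin 0, 0 < t s),
      ∏ s : Fin 0, f (t s) 0 1) :
    f m 0 0 = if m = 0 then 1 else 0 := by
  rcases m with _ | m
  · exact h00
  · simpa [Nat.antidiagonalTuple_zero_succ] using hform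

section braidSum

variable {K : Type*} [CommRing K] {n : ℕ} {f g e : ℕ → ℕ → ℕ → K} {i j k : ℕ}

lemma braidSum_eq_zero_of_pos (hf : IsTriangular n f) (hg : IsTriangular n g)
    (hi : i < n) (hj : j < n) (hk : k < n) (hj0 : 0 < j) : braidSum f g e i j k = 0 := by
  refine sum_eq_zero fun ab hab => sum_eq_zero fun h hh => sum_eq_zero fun l hl => ?_
  rw [HasAntidiagonal.mem_antidiagonal] at hab
  rw [mem_range] at hh hl
  rcases Nat.eq_zero_or_pos ab.1 with ha | ha
  · rw [hg k ab.2 l hk (by omega) (by omega) (Or.inl (by omega)), mul_zero, zero_mul]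
  · rw [hf i ab.1 h hi (by omega) (by omega) (Or.inl ha), zero_mul, zero_mul]

lemma braidSum_zero_left (he : IsTriangular n e) (hn : 1 < n) (hi : i < n) (hk : k < n) :
    braidSum f g e i 0 k = ∑ h ∈ range (i + 1), f i 0 h * g k 0 0 * e h 0 1 := by
  rw [braidSum, Nat.antidiagonal_zero, sum_singleton]
  refine sum_congr rfl fun h hh => sum_eq_single_of_mem 0 (by simp) fun l hl hl0 => ?_
  rw [mem_range] at hh hl
  rw [he h l 1 (by omega) (by omega) hn (Or.inl (Nat.pos_of_ne_zero hl0)), mul_zero]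

-- The `h = 0` term drops out because `e 0 0 1 = 0`.
lemma braidSum_eq (hf : IsTriangular n f) (hg : IsTriangular n g) (he : IsTriangular n e)
    (hg0 : g k 0 0 = if k = 0 then 1 else 0) (hn : 1 < n) (hi : i < n) (hj : j < n)
    (hk : k < n) :
    braidSum f g e i j k = if j = 0 ∧ k = 0 then ∑ h ∈ Icc 1 i, f i 0 h * e h 0 1 else 0 := by
  rcases Nat.eq_zero_or_pos j with rfl | hj0
  · rw [braidSum_zero_left he hn hi hk, hg0]
    rcases Nat.eq_zero_or_pos k with rfl | hk0
    · have hrange : range (i + 1) = insert 0 (Icc 1 i) := by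
        ext x; simp only [mem_range, mem_insert, mem_Icc]; omega
      simp only [true_and, if_true, mul_one]
      rw [hrange, sum_insert (by simp), he 0 0 1 (by omega) (by omega) hn (Or.inr one_pos),
        mul_zero, zero_add]
    · simp [hk0.ne']
  · rw [braidSum_eq_zero_of_pos hf hg hi hj hk hj0, if_neg (by omega)]

end braidSum

/-- verification of the three braid equations for the coefficients
arising in the case where `p 1 0 1` is not a root of unity of order `< n`. -/
theorem stmt17 {K : Type*} [Field K] (n : ℕ) (hn : 2 ≤ n) (p d : ℕ → ℕ → ℕ → K)
    (hpv : ∀ i j k, i < n → j < n → k < n → (0 < j ∨ i < k) → p i j k = 0)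
    (hdv : ∀ i j k, i < n → j < n → k < n → (0 < j ∨ i < k) → d i j k = 0)
    (hp00 : p 0 0 0 = 1) (hd00 : d 0 0 0 = 1)
    (hpform : ∀ i k, i < n → k < n → p i 0 k =
      ∑ t ∈ (Finset.Nat.antidiagonalTuple k i).filter (fun t => ∀ s : Fin k, 0 < t s),
        ∏ s : Fin k, p (t s) 0 1)
    (hdform : ∀ i k, i < n → k < n → d i 0 k =
      ∑ t ∈ (Finset.Nat.antidiagonalTuple k i).filter (fun t => ∀ s : Fin k, 0 < t s),
        ∏ s : Fin k, d (t s) 0 1)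
    (hsym : ∀ i, i < n →
      ∑ h ∈ Finset.Icc 1 i, p i 0 h * d h 0 1 = ∑ h ∈ Finset.Icc 1 i, d i 0 h * p h 0 1) :
    ∀ i j k, i < n → j < n → k < n →
      (∑ ab ∈ Finset.HasAntidiagonal.antidiagonal j, ∑ h ∈ Finset.range (i + 1),
          ∑ l ∈ Finset.range (k + 1), p i ab.1 h * d k ab.2 l * p h l 1
        = ∑ cd ∈ Finset.HasAntidiagonal.antidiagonal k, ∑ h ∈ Finset.range (i + 1),
          ∑ l ∈ Finset.range (j + 1), p i cd.1 h * p j cd.2 l * p h l 1) ∧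
      (∑ ab ∈ Finset.HasAntidiagonal.antidiagonal j, ∑ h ∈ Finset.range (i + 1),
          ∑ l ∈ Finset.range (k + 1), p i ab.1 h * p k ab.2 l * d h l 1
        = ∑ cd ∈ Finset.HasAntidiagonal.antidiagonal k, ∑ h ∈ Finset.range (i + 1),
          ∑ l ∈ Finset.range (j + 1), d i cd.1 h * d j cd.2 l * p h l 1) ∧
      (∑ ab ∈ Finset.HasAntidiagonal.antidiagonal j, ∑ h ∈ Finset.range (i + 1),
          ∑ l ∈ Finset.range (k + 1), d i ab.1 h * p k ab.2 l * d h l 1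
        = ∑ cd ∈ Finset.HasAntidiagonal.antidiagonal k, ∑ h ∈ Finset.range (i + 1),
          ∑ l ∈ Finset.range (j + 1), d i cd.1 h * d j cd.2 l * d h l 1) := by
  intro i j k hi hj hk
  have hp0 : ∀ m < n, p m 0 0 = if m = 0 then 1 else 0 := fun m hm =>
    apply_zero_zero_eq_ite hp00 (hpform m 0 hm (by omega))
  have hd0 : ∀ m < n, d m 0 0 = if m = 0 then 1 else 0 := fun m hm =>
    apply_zero_zero_eq_ite hd00 (hdform m 0 hm (by omega))
  refine ⟨?_, ?_, ?_⟩
  · change braidSum p d p i j k = braidSum p p p i k j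
    rw [braidSum_eq hpv hdv hpv (hd0 k hk) hn hi hj hk,
      braidSum_eq hpv hpv hpv (hp0 j hj) hn hi hk hj]
    exact if_congr and_comm rfl rfl
  · change braidSum p p d i j k = braidSum d d p i k j
    rw [braidSum_eq hpv hpv hdv (hp0 k hk) hn hi hj hk,
      braidSum_eq hdv hdv hpv (hd0 j hj) hn hi hk hj, hsym i hi]
    exact if_congr and_comm rfl rfl
  · change braidSum d p d i j k = braidSum d d d i k j
    rw [braidSum_eq hdv hpv hdv (hp0 k hk) hn hi hj hk,
      braidSum_eq hdv hdv hdv (hd0 j hj) hn hi hk hj]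
    exact if_congr and_comm rfl rfl
end

section
/- Let $s<n$ and suppose the scalars $(\mathfrak{p}_{ij}^k)$ satisfy the comultiplicativity identity $\mathfrak{p}_{ij}^{l+h}=\sum_{a+b=i,c+d=j}\mathfrak{p}_{ac}^l\mathfrak{p}_{bd}^h$, $\mathfrak{p}_{ij}^k=0$ for $k>i$, $\mathfrak{p}_{i0}^i=(\mathfrak{p}_{10}^1)^i$ with $\mathfrak{p}_{10}^1\ne 0$, the braid identity $\sum_{h=1}^{i}\mathfrak{p}_{ij}^h\mathfrak{p}_{h0}^1=\sum_{h=1}^{i}\sum_{l=1}^{j}\mathfrak{p}_{i0}^h\mathfrak{p}_{j0}^l\mathfrak{p}_{hl}^1$ for all $i,j>0$, and $(\mathfrak{p}_{10}^1)^r\ne 1$ for all $1\le r<s$. Then $\mathfrak{p}_{ij}^k=0$ whenever $i+j\le s$ and $i,j\ge 1$. -/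
/-!
Induct on `r = i + j`. Once `p a c k` vanishes for all `a, c ≥ 1` with `a + c < i + j`,
comultiplicativity with `k = 1 + (k - 1)` kills `p i j k` for `k ≥ 2`, since every surviving
term of the expansion involves such a smaller `p a c`. The braid identity then collapses to
`p i j 1 * q = q ^ (i + j) * p i j 1` with `q = p 1 0 1`, and `q ^ (i + j - 1) ≠ 1` forces
`p i j 1 = 0`.
-/

open Finset

section

variable {K : Type*}

def VanishesBelow [Zero K] (p : ℕ → ℕ → ℕ → K) (r : ℕ) : Prop :=
  ∀ a c k, 1 ≤ a → 1 ≤ c → a + c < r → p a c k = 0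

theorem vanishesBelow_zero [Zero K] (p : ℕ → ℕ → ℕ → K) : VanishesBelow p 0 :=
  fun _ _ _ _ _ h ↦ absurd h (Nat.not_lt_zero _)

theorem eq_zero_of_two_le_of_vanishesBelow [Semiring K] {p : ℕ → ℕ → ℕ → K}
    (hcm : ∀ i j l h : ℕ,
      p i j (l + h) = ∑ ab ∈ Finset.HasAntidiagonal.antidiagonal i,
        ∑ cd ∈ Finset.HasAntidiagonal.antidiagonal j, p ab.1 cd.1 l * p ab.2 cd.2 h)
    (hvan : ∀ i j k, i < k → p i j k = 0) {i j k : ℕ}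
    (hbelow : VanishesBelow p (i + j)) (hj : 1 ≤ j) (hk : 2 ≤ k) : p i j k = 0 := by
  obtain ⟨m, rfl⟩ : ∃ m, k = 1 + (m + 1) := ⟨k - 2, by omega⟩
  rw [hcm]
  refine sum_eq_zero fun ab hab ↦ sum_eq_zero fun cd hcd ↦ ?_
  rw [HasAntidiagonal.mem_antidiagonal] at hab hcd
  rcases Nat.eq_zero_or_pos ab.1 with ha | ha
  · rw [ha, hvan 0 _ 1 one_pos, zero_mul]
  rcases Nat.eq_zero_or_pos cd.1 with hc | hc
  · rcases Nat.eq_zero_or_pos ab.2 with hb | hb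
    · rw [hb, hvan 0 _ _ (Nat.succ_pos m), mul_zero]
    · rw [hbelow ab.2 cd.2 _ hb (by omega) (by omega), mul_zero]
  rcases Nat.lt_or_ge (ab.1 + cd.1) (i + j) with hlt | hge
  · rw [hbelow ab.1 cd.1 1 ha hc hlt, zero_mul]
  · rw [show ab.2 = 0 by omega, hvan 0 _ _ (Nat.succ_pos m), mul_zero]

theorem mul_eq_pow_mul_of_braid [Semiring K] {p : ℕ → ℕ → ℕ → K} {i j : ℕ}
    (hi : 1 ≤ i) (hj : 1 ≤ j)
    (hbraid : ∑ h ∈ Icc 1 i, p i j h * p h 0 1 =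
      ∑ h ∈ Icc 1 i, ∑ l ∈ Icc 1 j, p i 0 h * p j 0 l * p h l 1)
    (hdiag : ∀ i, p i 0 i = (p 1 0 1) ^ i) (hbelow : VanishesBelow p (i + j))
    (hhigh : ∀ k, 2 ≤ k → p i j k = 0) :
    p i j 1 * p 1 0 1 = p 1 0 1 ^ (i + j) * p i j 1 := by
  have hlhs : ∑ h ∈ Icc 1 i, p i j h * p h 0 1 = p i j 1 * p 1 0 1 := by
    refine sum_eq_single_of_mem 1 (mem_Icc.mpr ⟨le_rfl, hi⟩) fun h hh h1 ↦ ?_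
    rw [hhigh h (by rw [mem_Icc] at hh; omega), zero_mul]
  have hrhs : ∑ h ∈ Icc 1 i, ∑ l ∈ Icc 1 j, p i 0 h * p j 0 l * p h l 1
      = p i 0 i * p j 0 j * p i j 1 := by
    rw [sum_eq_single_of_mem i (mem_Icc.mpr ⟨hi, le_rfl⟩)]
    · refine sum_eq_single_of_mem j (mem_Icc.mpr ⟨hj, le_rfl⟩) fun l hl hlj ↦ ?_
      rw [mem_Icc] at hl
      rw [hbelow i l 1 hi hl.1 (by omega), mul_zero]
    · refine fun h hh hhi ↦ sum_eq_zero fun l hl ↦ ?_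
      rw [mem_Icc] at hh hl
      rw [hbelow h l 1 hh.1 hl.1 (by omega), mul_zero]
  rwa [hlhs, hrhs, hdiag i, hdiag j, ← pow_add] at hbraid

theorem eq_zero_of_mul_eq_pow_succ_mul {M : Type*} [CommMonoidWithZero M] [IsCancelMulZero M] {q x : M}
    {r : ℕ} (hq : q ≠ 0) (hr : q ^ r ≠ 1) (h : x * q = q ^ (r + 1) * x) : x = 0 := by
  by_contra hx
  refine hr (mul_left_cancel₀ hq ?_)
  calc q * q ^ r = q ^ (r + 1) := (pow_succ' q r).symm
    _ = q := mul_right_cancel₀ hx (h.symm.trans (mul_comm x q))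
    _ = q * 1 := (mul_one q).symm

end

theorem stmt18_general {K : Type*} [Field K] (s : ℕ)
    (p : ℕ → ℕ → ℕ → K)
    (h0 : ∀ i j, p i j 0 = if i + j = 0 then 1 else 0)
    (hcm : ∀ i j l h : ℕ,
      p i j (l + h) = ∑ ab ∈ Finset.HasAntidiagonal.antidiagonal i, ∑ cd ∈ Finset.HasAntidiagonal.antidiagonal j,
        p ab.1 cd.1 l * p ab.2 cd.2 h)
    (hvan : ∀ i j k, i < k → p i j k = 0)
    (hdiag : ∀ i, p i 0 i = (p 1 0 1) ^ i)
    (hne : p 1 0 1 ≠ 0)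
    (hbraid : ∀ i j, 0 < i → 0 < j →
      ∑ h ∈ Finset.Icc 1 i, p i j h * p h 0 1 =
        ∑ h ∈ Finset.Icc 1 i, ∑ l ∈ Finset.Icc 1 j, p i 0 h * p j 0 l * p h l 1)
    (hroot : ∀ r, 1 ≤ r → r < s → (p 1 0 1) ^ r ≠ 1) :
    ∀ i j k, 1 ≤ i → 1 ≤ j → i + j ≤ s → p i j k = 0 := by
  have hstep : ∀ r ≤ s, VanishesBelow p r → VanishesBelow p (r + 1) := by
    intro r hrs hbelow i j k hi hj hij
    rcases Nat.lt_or_ge (i + j) r with hlt | hr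
    · exact hbelow i j k hi hj hlt
    obtain rfl : i + j = r := by omega
    have hhigh k (hk : 2 ≤ k) := eq_zero_of_two_le_of_vanishesBelow hcm hvan hbelow hj hk
    have hone : p i j 1 = 0 := by
      refine eq_zero_of_mul_eq_pow_succ_mul hne (hroot (i + j - 1) (by omega) (by omega)) ?_
      rw [Nat.sub_add_cancel (by omega)]
      exact mul_eq_pow_mul_of_braid hi hj (hbraid i j hi hj) hdiag hbelow hhigh
    rcases k with _ | _ | k
    · rw [h0, if_neg (by omega)]
    · exact hone
    · exact hhigh _ (by omega)
  have hall : ∀ r ≤ s + 1, VanishesBelow p r := by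
    intro r
    induction r with
    | zero => exact fun _ ↦ vanishesBelow_zero p
    | succ r ih => exact fun hr ↦ hstep r (by omega) (ih (by omega))
  exact fun i j k hi hj hij ↦ hall (s + 1) le_rfl i j k hi hj (Nat.lt_succ_of_le hij)

/-- if `(p 1 0 1)^r ≠ 1` for `1 ≤ r < s`, then `p i j k = 0`
whenever `i + j ≤ s` and `i, j ≥ 1`. -/
theorem stmt18 {K : Type*} [Field K] [CharZero K] (n s : ℕ) (hs : s < n)
    (p : ℕ → ℕ → ℕ → K)
    (h0 : ∀ i j, p i j 0 = if i + j = 0 then 1 else 0)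
    (hcm : ∀ i j l h : ℕ,
      p i j (l + h) = ∑ ab ∈ Finset.HasAntidiagonal.antidiagonal i, ∑ cd ∈ Finset.HasAntidiagonal.antidiagonal j,
        p ab.1 cd.1 l * p ab.2 cd.2 h)
    (hvan : ∀ i j k, i < k → p i j k = 0)
    (hdiag : ∀ i, p i 0 i = (p 1 0 1) ^ i)
    (hne : p 1 0 1 ≠ 0)
    (hbraid : ∀ i j, 0 < i → 0 < j →
      ∑ h ∈ Finset.Icc 1 i, p i j h * p h 0 1 =
        ∑ h ∈ Finset.Icc 1 i, ∑ l ∈ Finset.Icc 1 j, p i 0 h * p j 0 l * p h l 1)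
    (hroot : ∀ r, 1 ≤ r → r < s → (p 1 0 1) ^ r ≠ 1) :
    ∀ i j k, 1 ≤ i → 1 ≤ j → i + j ≤ s → p i j k = 0 :=
  stmt18_general s p h0 hcm hvan hdiag hne hbraid hroot
end
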